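/- The eigenvalues u_j(τ) = N·ζ^j·e^{τ/N}, j = 0,...,N-1 (with ζ = e^{2πi/N}), have pairwise distinct imaginary parts for τ in a dense open subset of ℂ; more precisely, the set of τ ∈ ℂ for which two distinct eigenvalues have equal imaginary parts is contained in a countable union of real-analytic curves and has empty interior. -/

import Mathlib

open Complex

/-- Fibers of `t ↦ exp (t * I)` over ℝ are countable. -/
lemma fiber_countable (w : ℂ) : {t : ℝ | Complex.exp (↑t * I) = w}.Countable := by
  by_cases h : ∃ t₀ : ℝ, Complex.exp (↑t₀ * I) = w
  · obtain ⟨t₀, ht₀⟩ := h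
    apply Set.Countable.mono ?_ (Set.countable_range fun n : ℤ => t₀ + n * (2 * Real.pi))
    intro t ht
    have : Complex.exp (↑t * I) = Complex.exp (↑t₀ * I) := ht.trans ht₀.symm
    obtain ⟨n, hn⟩ := Complex.exp_eq_exp_iff_exists_int.mp this
    refine ⟨n, ?_⟩
    have h2 : (↑(t₀ + n * (2 * Real.pi)) : ℂ) * I = ↑t * I := by
      push_cast
      rw [hn]; ring
    have h3 : (↑(t₀ + n * (2 * Real.pi)) : ℂ) = ↑t := mul_right_cancel₀ Complex.I_ne_zero h2
    exact_mod_cast h3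
  · convert Set.countable_empty
    ext t
    simp only [Set.mem_setOf_eq, Set.mem_empty_iff_false, iff_false]
    exact fun ht => h ⟨t, ht⟩

/-- The eigenvalues `u_j(τ) = N·ζ^j·e^{τ/N}` (with `ζ = e^{2πi/N}`) of quantum
multiplication by `c₁(ℙ^{N-1})` have pairwise distinct imaginary parts for `τ`
outside a set with empty interior; equivalently the bad set, where two distinct
eigenvalues have equal imaginary parts, has dense complement. -/
theorem eigenvalues_distinct_im_generic (N : ℕ) (hN : 2 ≤ N) :
    let u : Fin N → ℂ → ℂ := fun j τ =>
      (N : ℂ) * Complex.exp (2 * Real.pi * Complex.I / N) ^ (j : ℕ) *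
        Complex.exp (τ / N)
    let S : Set ℂ := {τ | ∃ j k : Fin N, j ≠ k ∧ (u j τ).im = (u k τ).im}
    interior S = ∅ ∧ Dense Sᶜ := by
  intro u S
  have hN0 : (N : ℝ) ≠ 0 := by positivity
  have hNC : (N : ℂ) ≠ 0 := by exact_mod_cast (by positivity : (N:ℝ) ≠ 0)
  set ζ : ℂ := Complex.exp (2 * Real.pi * Complex.I / N) with hζ
  have hprim : IsPrimitiveRoot ζ N := Complex.isPrimitiveRoot_exp N (by omega)
  -- the bad set of imaginary parts
  set D : Set ℝ := {y | ∃ j k : Fin N, j ≠ k ∧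
      (u j (↑y * I)).im = (u k (↑y * I)).im} with hD
  -- key: im of u j τ scales by exp(τ.re/N)
  have key : ∀ (j : Fin N) (τ : ℂ),
      (u j τ).im = Real.exp (τ.re / N) * (u j (↑τ.im * I)).im := by
    intro j τ
    have hτ : τ / N = ↑(τ.re / N) + (↑τ.im * I) / N := by
      have h2 : (↑(τ.re / N):ℂ) + (↑τ.im * I) / N = (↑τ.re + ↑τ.im * I) / N := by
        push_cast; ring
      rw [h2, Complex.re_add_im]
    have : u j τ = (↑(Real.exp (τ.re / N)) : ℂ) * u j (↑τ.im * I) := by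
      simp only [u, hτ, Complex.exp_add, Complex.ofReal_exp]
      ring
    rw [this]; simp [Complex.mul_im, ← Complex.ofReal_div, Complex.exp_ofReal_re]
  -- S ⊆ im ⁻¹' D
  have hSD : S ⊆ Complex.im ⁻¹' D := by
    rintro τ ⟨j, k, hjk, h⟩
    refine ⟨j, k, hjk, ?_⟩
    rw [key j τ, key k τ] at h
    exact mul_left_cancel₀ (Real.exp_pos _).ne' h
  -- D is countable
  have hDc : D.Countable := by
    have : D ⊆ ⋃ p : Fin N × Fin N,
        ({t : ℝ | Complex.exp (↑(t / N) * I) =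
            ↑(‖(N:ℂ) * ζ ^ (p.1:ℕ) - (N:ℂ) * ζ ^ (p.2:ℕ)‖) /
              ((N:ℂ) * ζ ^ (p.1:ℕ) - (N:ℂ) * ζ ^ (p.2:ℕ))} ∪
         {t : ℝ | Complex.exp (↑(t / N) * I) =
            -(↑(‖(N:ℂ) * ζ ^ (p.1:ℕ) - (N:ℂ) * ζ ^ (p.2:ℕ)‖) /
              ((N:ℂ) * ζ ^ (p.1:ℕ) - (N:ℂ) * ζ ^ (p.2:ℕ)))}) := by
      rintro y ⟨j, k, hjk, h⟩
      set c : ℂ := (N:ℂ) * ζ ^ (j:ℕ) - (N:ℂ) * ζ ^ (k:ℕ) with hc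
      have hcne : c ≠ 0 := by
        intro h0
        apply hjk
        have : (N:ℂ) * ζ ^ (j:ℕ) = (N:ℂ) * ζ ^ (k:ℕ) := by
          have := sub_eq_zero.mp h0; exact this
        have hpow : ζ ^ (j:ℕ) = ζ ^ (k:ℕ) := mul_left_cancel₀ hNC this
        exact Fin.ext (hprim.pow_inj j.isLt k.isLt hpow)
      have hexp : (↑y * I) / (N:ℂ) = ↑(y / N) * I := by
        push_cast; field_simp
      -- z = c * exp(...) is real
      set e : ℂ := Complex.exp (↑(y / N) * I) with he
      have him : (c * e).im = 0 := by
        have : (u j (↑y * I)) - (u k (↑y * I)) = c * e := by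
          simp only [u, hexp, hc, he]; ring
        have h2 : ((u j (↑y * I)) - (u k (↑y * I))).im = 0 := by
          rw [Complex.sub_im]; rw [h]; ring
        rw [this] at h2; exact h2
      have habs : ‖c * e‖ = ‖c‖ := by
        rw [norm_mul, he, Complex.norm_exp_ofReal_mul_I, mul_one]
      have hre : c * e = ((c * e).re : ℂ) := by
        exact Complex.ext rfl (by simp [him])
      have habs2 : |(c * e).re| = ‖c‖ := by
        rw [← Real.norm_eq_abs, ← Complex.norm_real, ← hre, habs]
      refine Set.mem_iUnion.mpr ⟨(j, k), ?_⟩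
      rcases abs_cases (c * e).re with ⟨h1, _⟩ | ⟨h1, _⟩
      · left
        show e = ↑(‖c‖) / c
        rw [eq_div_iff hcne, mul_comm, ← habs2, h1, ← hre]
      · right
        show e = -(↑(‖c‖) / c)
        rw [← neg_div, eq_div_iff hcne, mul_comm, ← habs2, h1, Complex.ofReal_neg,
          neg_neg, ← hre]
    apply Set.Countable.mono this
    apply Set.countable_iUnion
    intro p
    apply Set.Countable.union
    all_goals {
      refine Set.Countable.mono (fun t ht => ht) ?_
      have : ∀ w : ℂ, {t : ℝ | Complex.exp (↑(t / (N:ℝ)) * I) = w}.Countable := by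
        intro w
        have hinj : Function.Injective (fun t : ℝ => t / (N:ℝ)) := fun a b h => by
          field_simp at h; exact h
        exact (fiber_countable w).preimage hinj
      exact this _
    }
  have hDense : Dense ((Complex.im ⁻¹' D)ᶜ) := by
    have hd : Dense Dᶜ := hDc.dense_compl ℝ
    rw [← Set.preimage_compl]
    exact hd.preimage Complex.isOpenMap_im
  have hSc : Dense Sᶜ := hDense.mono (Set.compl_subset_compl.mpr hSD)
  exact ⟨interior_eq_empty_iff_dense_compl.mpr hSc, hSc⟩
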